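/- Spectral mapping for the Szegedy walk: if λ is an eigenvalue of J_{2n}(p) with λ ≠ ±1 and normalized eigenvector ṽ_λ, and a_λ ∈ ℂ^{2n}⊗ℂ² is the lift a_λ = ṽ_λ(1)|1,R⟩ + Σ_{i=2}^{n} ṽ_λ(i)|i⟩⊗(√p|L⟩+√q|R⟩) + Σ_{i=n+1}^{2n-1} ṽ_λ(i)|i⟩⊗(√q|L⟩+√p|R⟩) + ṽ_λ(2n)|2n,L⟩, b_λ = S^{(2n)}a_λ, then for each choice of sign, u_± = a_λ − e^{±iφ}b_λ with cos φ = λ is an eigenvector of U^{(2n)} with eigenvalue e^{±iφ}. Moreover a_{+1} and a_{-1} (lifts of the ±1 eigenvectors of J_{2n}(p)) are eigenvectors of U^{(2n)} with eigenvalues +1 and −1 respectively. -/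

import Mathlib

/-- The `2n × 2n` Jacobi matrix `J_{2n}(p)` of the reduced random walk on the path
`P_{2n}`: zero diagonal, couplings `√p` at the extreme positions, `q = 1-p` at the
central position, and `√(pq)` elsewhere (0-based indices). -/
noncomputable def Jp (p : ℝ) (n : ℕ) : Matrix (Fin (2*n)) (Fin (2*n)) ℝ :=
  Matrix.of fun i j =>
    if i.1 + 1 = j.1 ∨ j.1 + 1 = i.1 then
      (if min i.1 j.1 = 0 ∨ min i.1 j.1 = 2*n - 2 then Real.sqrt p
       else if min i.1 j.1 = n - 1 then 1 - p
       else Real.sqrt (p * (1 - p)))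
    else 0

/-- Chirality amplitudes of the coin state `φ₁ = √p·L + √q·R` (index `0 = L`, `1 = R`). -/
noncomputable def phi1 (p : ℝ) : Fin 2 → ℂ := fun a =>
  if a = 0 then (Real.sqrt p : ℂ) else (Real.sqrt (1 - p) : ℂ)

/-- Chirality amplitudes of the coin state `φ₂ = √q·L + √p·R`. -/
noncomputable def phi2 (p : ℝ) : Fin 2 → ℂ := fun a =>
  if a = 0 then (Real.sqrt (1 - p) : ℂ) else (Real.sqrt p : ℂ)

/-- The coin operator `C^{(2n)}` of the Szegedy walk on the path `P_{2n}`: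
`|R⟩⟨R|` at vertex `0`, `2|φ₁⟩⟨φ₁| - I` at vertices `1, …, n-1`,
`2|φ₂⟩⟨φ₂| - I` at vertices `n, …, 2n-2`, and `|L⟩⟨L|` at vertex `2n-1`
(0-based vertices). -/
noncomputable def Cmat (p : ℝ) (n : ℕ) :
    Matrix (Fin (2*n) × Fin 2) (Fin (2*n) × Fin 2) ℂ :=
  Matrix.of fun z w =>
    if z.1 ≠ w.1 then 0
    else if z.1.1 = 0 then (if z.2 = 1 ∧ w.2 = 1 then 1 else 0)
    else if z.1.1 = 2*n - 1 then (if z.2 = 0 ∧ w.2 = 0 then 1 else 0)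
    else if z.1.1 ≤ n - 1 then
      2 * phi1 p z.2 * phi1 p w.2 - (if z.2 = w.2 then 1 else 0)
    else
      2 * phi2 p z.2 * phi2 p w.2 - (if z.2 = w.2 then 1 else 0)

/-- The shift operator `S^{(2n)}`: `|i,R⟩ ↦ |i+1,L⟩` and `|i,L⟩ ↦ |i-1,R⟩`. -/
def Smat (n : ℕ) : Matrix (Fin (2*n) × Fin 2) (Fin (2*n) × Fin 2) ℂ :=
  Matrix.of fun z w =>
    if z.2 = 0 ∧ w.2 = 1 ∧ z.1.1 = w.1.1 + 1 then 1
    else if z.2 = 1 ∧ w.2 = 0 ∧ z.1.1 + 1 = w.1.1 then 1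
    else 0

/-- The time evolution operator `U^{(2n)} = S^{(2n)} C^{(2n)}` of the Szegedy walk. -/
noncomputable def Umat (p : ℝ) (n : ℕ) :
    Matrix (Fin (2*n) × Fin 2) (Fin (2*n) × Fin 2) ℂ :=
  Smat n * Cmat p n


/-- The lift `a` of a vector `v` on the path to the walk space:
`a = v(1)|1,R⟩ + Σ_{i=2}^n v(i)|i⟩⊗(√p L + √q R)
   + Σ_{i=n+1}^{2n-1} v(i)|i⟩⊗(√q L + √p R) + v(2n)|2n,L⟩` (0-based positions). -/
noncomputable def liftv (p : ℝ) (n : ℕ) (v : Fin (2*n) → ℝ) :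
    Fin (2*n) × Fin 2 → ℂ := fun z =>
  (v z.1 : ℂ) *
    (if z.1.1 = 0 then (if z.2 = 1 then 1 else 0)
     else if z.1.1 ≤ n - 1 then (if z.2 = 0 then (Real.sqrt p : ℂ) else (Real.sqrt (1 - p) : ℂ))
     else if z.1.1 ≤ 2*n - 2 then (if z.2 = 0 then (Real.sqrt (1 - p) : ℂ) else (Real.sqrt p : ℂ))
     else (if z.2 = 0 then 1 else 0))

/-!
Write `w k` for the coin vector at vertex `k` (`R`, then `φ₁`, then `φ₂`, then `L`), `a` for the
lift of `v` and `b = S a`. Every coin acts as the reflection `2 |w k⟩⟨w k| - 1` on the slots that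
carry arcs, so `C a = a`. Contracting `b` against the coin vectors gives back `J v`, because the
entry `J (k, k+1)` is the product `w k R * w (k+1) L` of the amplitudes along the edge; hence
`C b = 2λ a - b`. Together with `S b = a`, this makes `U = S C` act on `span {a, b}` by
`a ↦ b`, `b ↦ 2λ b - a`, so `a - e b` is an eigenvector for `e` whenever `e² - 2λ e + 1 = 0`,
i.e. `e = e^{±iφ}`; it vanishes only if `e² = 1`, which forces `λ = ±1`. For `λ = ±1` the vector
`d = b - λ a` satisfies `C d = -d` and `S d = -λ d`; the first makes `d (k, R)` vanish with
`d (k, L)`, the second passes this on to `d (k+1, L)`, and starting from `d (0, L) = 0` we get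
`d = 0`, i.e. `U a = S a = λ a`.
-/

open Matrix

namespace PathWalk

variable {R : Type*} {m : ℕ}

/-- The flip-flop shift of the path with `m` vertices; coin slot `0` is `L` and slot `1` is `R`. -/
def shift (R : Type*) [Zero R] [One R] (m : ℕ) : Matrix (Fin m × Fin 2) (Fin m × Fin 2) R :=
  Matrix.of fun z w =>
    if z.2 = 0 ∧ w.2 = 1 ∧ z.1.1 = w.1.1 + 1 then 1
    else if z.2 = 1 ∧ w.2 = 0 ∧ z.1.1 + 1 = w.1.1 then 1
    else 0

section Shift

variable [Semiring R]

theorem shift_mulVec_apply_left (x : Fin m × Fin 2 → R) (k : Fin m) :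
    (shift R m *ᵥ x) (k, 0) = if h : k.val = 0 then 0 else x (⟨k.val - 1, by omega⟩, 1) := by
  simp only [mulVec, dotProduct, shift, of_apply, Fintype.sum_prod_type, Fin.sum_univ_two]
  simp only [Fin.isValue, zero_ne_one, false_and, and_false, ↓reduceIte, true_and, zero_mul,
    one_ne_zero, and_self, ite_mul, one_mul, zero_add, dite_eq_ite]
  split_ifs with hk
  · exact Finset.sum_eq_zero fun j _ => if_neg (by omega)
  · have hj : ∀ j : Fin m, k.val = j.val + 1 ↔ j = ⟨k.val - 1, by omega⟩ := fun j => by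
      rw [Fin.ext_iff]; dsimp only; omega
    simp only [hj, Finset.sum_ite_eq', Finset.mem_univ, if_true]

theorem shift_mulVec_apply_right (x : Fin m × Fin 2 → R) (k : Fin m) :
    (shift R m *ᵥ x) (k, 1) = if h : k.val + 1 < m then x (⟨k.val + 1, h⟩, 0) else 0 := by
  simp only [mulVec, dotProduct, shift, of_apply, Fintype.sum_prod_type, Fin.sum_univ_two]
  simp only [Fin.isValue, zero_ne_one, false_and, and_false, ↓reduceIte, true_and, zero_mul,
    one_ne_zero, and_self, ite_mul, one_mul, add_zero]
  split_ifs with hk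
  · have hj : ∀ j : Fin m, k.val + 1 = j.val ↔ j = ⟨k.val + 1, hk⟩ := fun j => by
      rw [Fin.ext_iff]; dsimp only; omega
    simp only [hj, Finset.sum_ite_eq', Finset.mem_univ, if_true]
  · exact Finset.sum_eq_zero fun j _ => if_neg (by omega)

/-- The slots `(0, L)` and `(m - 1, R)` carry no arc of the path; the walk lives on the
vectors vanishing there. -/
def arcSpace (R : Type*) [Semiring R] (m : ℕ) : Submodule R (Fin m × Fin 2 → R) where
  carrier := {x | ∀ k : Fin m, (k.val = 0 → x (k, 0) = 0) ∧ (k.val + 1 = m → x (k, 1) = 0)}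
  add_mem' hx hy k :=
    ⟨fun h => by simp [(hx k).1 h, (hy k).1 h], fun h => by simp [(hx k).2 h, (hy k).2 h]⟩
  zero_mem' _ := ⟨fun _ => rfl, fun _ => rfl⟩
  smul_mem' r x hx k := ⟨fun h => by simp [(hx k).1 h], fun h => by simp [(hx k).2 h]⟩

theorem shift_mulVec_mem_arcSpace (x : Fin m × Fin 2 → R) :
    shift R m *ᵥ x ∈ arcSpace R m := fun k =>
  ⟨fun hk => by rw [shift_mulVec_apply_left, dif_pos hk],
   fun hk => by rw [shift_mulVec_apply_right, dif_neg (by omega)]⟩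

theorem shift_mulVec_shift_mulVec {x : Fin m × Fin 2 → R} (hx : x ∈ arcSpace R m) :
    shift R m *ᵥ (shift R m *ᵥ x) = x := by
  ext ⟨k, c⟩
  match c with
  | 0 =>
    rw [shift_mulVec_apply_left]
    split_ifs with hk
    · exact ((hx k).1 hk).symm
    · rw [shift_mulVec_apply_right, dif_pos (show k.val - 1 + 1 < m by omega)]
      congr
      exact Nat.sub_add_cancel (Nat.pos_of_ne_zero hk)
  | 1 =>
    rw [shift_mulVec_apply_right]
    split_ifs with hk
    · rw [shift_mulVec_apply_left, dif_neg (Nat.succ_ne_zero _)]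
      rfl
    · exact ((hx k).2 (by omega)).symm

end Shift

section Lift

variable [CommRing R] (w : Fin m → Fin 2 → R)

def coinLift (v : Fin m → R) : Fin m × Fin 2 → R := fun z => v z.1 * w z.1 z.2

def coinContract (x : Fin m × Fin 2 → R) : Fin m → R := fun k => ∑ c, w k c * x (k, c)

def jacobi : Matrix (Fin m) (Fin m) R :=
  Matrix.of fun i j =>
    if i.val + 1 = j.val then w i 1 * w j 0
    else if j.val + 1 = i.val then w j 1 * w i 0
    else 0

/-- The coin `C` is the reflection `2 |w k⟩⟨w k| - 1` at every vertex `k`, on the slots that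
carry arcs. -/
def IsReflectionCoin (C : Matrix (Fin m × Fin 2) (Fin m × Fin 2) R) : Prop :=
  ∀ x ∈ arcSpace R m, C *ᵥ x = (2 : R) • coinLift w (coinContract w x) - x

variable {w}

theorem coinLift_smul (r : R) (v : Fin m → R) : coinLift w (r • v) = r • coinLift w v := by
  ext z
  simp only [coinLift, Pi.smul_apply, smul_eq_mul, mul_assoc]

theorem coinContract_coinLift (hw : ∀ k, ∑ c, w k c ^ 2 = 1) (v : Fin m → R) :
    coinContract w (coinLift w v) = v := by
  ext k
  have hk := hw k
  simp only [coinContract, coinLift, Fin.sum_univ_two] at hk ⊢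
  linear_combination (v k) * hk

theorem coinLift_ne_zero (hw : ∀ k, ∑ c, w k c ^ 2 = 1) {v : Fin m → R} (hv : v ≠ 0) :
    coinLift w v ≠ 0 := fun h => hv <| by
  rw [← coinContract_coinLift hw v, h]
  ext k
  simp [coinContract]

theorem coinLift_mem_arcSpace (hw : Function.uncurry w ∈ arcSpace R m) (v : Fin m → R) :
    coinLift w v ∈ arcSpace R m := fun k =>
  ⟨fun hk => by simp [coinLift, show w k 0 = 0 from (hw k).1 hk],
   fun hk => by simp [coinLift, show w k 1 = 0 from (hw k).2 hk]⟩

theorem jacobi_apply_eq_sum (i j : Fin m) :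
    jacobi w i j = ∑ c, ∑ d, w i c * shift R m (i, c) (j, d) * w j d := by
  simp only [jacobi, of_apply, shift, mul_ite, mul_one, mul_zero, ite_mul, zero_mul,
    Fin.sum_univ_two, Fin.isValue, zero_ne_one, one_ne_zero, false_and, and_false, ↓reduceIte,
    true_and, zero_add, add_zero]
  split_ifs <;> first | omega | ring

theorem coinContract_shift_mulVec_coinLift (v : Fin m → R) :
    coinContract w (shift R m *ᵥ coinLift w v) = jacobi w *ᵥ v := by
  ext i
  simp only [coinContract, coinLift, mulVec, dotProduct, jacobi_apply_eq_sum,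
    Fintype.sum_prod_type, Finset.mul_sum, Finset.sum_mul]
  rw [Finset.sum_comm]
  refine Finset.sum_congr rfl fun j _ => Finset.sum_congr rfl fun c _ =>
    Finset.sum_congr rfl fun d _ => by ring

end Lift

section Spectrum

variable [CommRing R] {w : Fin m → Fin 2 → R} {C : Matrix (Fin m × Fin 2) (Fin m × Fin 2) R}

theorem IsReflectionCoin.mulVec_coinLift (hC : IsReflectionCoin w C)
    (hw : ∀ k, ∑ c, w k c ^ 2 = 1) (hends : Function.uncurry w ∈ arcSpace R m)
    (v : Fin m → R) : C *ᵥ coinLift w v = coinLift w v := by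
  rw [hC _ (coinLift_mem_arcSpace hends v), coinContract_coinLift hw, two_smul,
    add_sub_cancel_right]

theorem IsReflectionCoin.mulVec_shift_mulVec_coinLift (hC : IsReflectionCoin w C)
    {v : Fin m → R} {lam : R} (hJ : jacobi w *ᵥ v = lam • v) :
    C *ᵥ (shift R m *ᵥ coinLift w v) =
      (2 * lam) • coinLift w v - shift R m *ᵥ coinLift w v := by
  rw [hC _ (shift_mulVec_mem_arcSpace _), coinContract_shift_mulVec_coinLift, hJ,
    coinLift_smul, mul_smul]

theorem shift_mul_mulVec_coinLift_sub_smul (hC : IsReflectionCoin w C)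
    (hw : ∀ k, ∑ c, w k c ^ 2 = 1) (hends : Function.uncurry w ∈ arcSpace R m)
    {v : Fin m → R} {lam e : R} (hJ : jacobi w *ᵥ v = lam • v) (he : e * e + 1 = 2 * lam * e) :
    (shift R m * C) *ᵥ (coinLift w v - e • shift R m *ᵥ coinLift w v) =
      e • (coinLift w v - e • shift R m *ᵥ coinLift w v) := by
  rw [← mulVec_mulVec, mulVec_sub, mulVec_smul, hC.mulVec_coinLift hw hends,
    hC.mulVec_shift_mulVec_coinLift hJ]
  simp only [mulVec_sub, mulVec_smul, shift_mulVec_shift_mulVec (coinLift_mem_arcSpace hends v)]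
  ext z
  simp only [Pi.sub_apply, Pi.smul_apply, smul_eq_mul]
  linear_combination (shift R m *ᵥ coinLift w v) z * he

theorem coinLift_sub_smul_shift_mulVec_ne_zero [NoZeroDivisors R] [NeZero (2 : R)]
    (hw : ∀ k, ∑ c, w k c ^ 2 = 1) (hends : Function.uncurry w ∈ arcSpace R m)
    {v : Fin m → R} (hv : v ≠ 0) {lam e : R} (he : e * e + 1 = 2 * lam * e)
    (hlam₁ : lam ≠ 1) (hlam₂ : lam ≠ -1) :
    coinLift w v - e • shift R m *ᵥ coinLift w v ≠ 0 := by
  set a := coinLift w v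
  set b := shift R m *ᵥ a
  have hSb : shift R m *ᵥ b = a := shift_mulVec_shift_mulVec (coinLift_mem_arcSpace hends v)
  have hb : b ≠ 0 := fun hb => coinLift_ne_zero hw hv (show a = 0 by rw [← hSb, hb, mulVec_zero])
  intro h
  have hab : a = e • b := sub_eq_zero.mp h
  have hba : b = e • a := by
    conv_lhs => rw [show b = shift R m *ᵥ a from rfl, hab, mulVec_smul, hSb]
  have he2 : e * e = 1 :=
    smul_left_injective R hb (show (e * e) • b = (1 : R) • b by
      rw [one_smul, mul_smul, ← hab, ← hba])
  have hlam_e : lam * e = 1 := by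
    have h2 : (2 : R) * (lam * e - 1) = 0 := by linear_combination -he + he2
    linear_combination (mul_eq_zero.mp h2).resolve_left two_ne_zero
  have hlam2 : lam * lam = 1 := by linear_combination (lam * e + 1) * hlam_e - lam * lam * he2
  exact (mul_self_eq_one_iff.mp hlam2).elim hlam₁ hlam₂

theorem eq_zero_of_shift_mulVec_eq_smul [NoZeroDivisors R]
    (hwR : ∀ k : Fin m, k.val + 1 < m → w k 1 ≠ 0)
    {d : Fin m × Fin 2 → R} (hd : d ∈ arcSpace R m) {μ : R} (hSd : shift R m *ᵥ d = μ • d)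
    (hwd : coinContract w d = 0) : d = 0 := by
  have right_of_left : ∀ k : Fin m, d (k, 0) = 0 → d (k, 1) = 0 := fun k hk0 => by
    by_cases hk : k.val + 1 < m
    · have hk' := congrFun hwd k
      simp only [coinContract, Fin.sum_univ_two, hk0, mul_zero, zero_add, Pi.zero_apply] at hk'
      exact (mul_eq_zero.mp hk').resolve_left (hwR k hk)
    · exact (hd k).2 (by omega)
  have hleft : ∀ i (hi : i < m), d (⟨i, hi⟩, 0) = 0 := by
    intro i
    induction i with
    | zero => exact fun hi => (hd _).1 rfl
    | succ i ih =>
      intro hi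
      have h := congrFun hSd (⟨i, by omega⟩, 1)
      rw [shift_mulVec_apply_right, dif_pos hi, Pi.smul_apply,
        right_of_left _ (ih (by omega)), smul_zero] at h
      exact h
  ext ⟨⟨i, hi⟩, c⟩
  match c with
  | 0 => exact hleft i hi
  | 1 => exact right_of_left _ (hleft i hi)

theorem shift_mulVec_coinLift_eq_smul [NoZeroDivisors R] [NeZero (2 : R)]
    (hC : IsReflectionCoin w C)
    (hw : ∀ k, ∑ c, w k c ^ 2 = 1) (hends : Function.uncurry w ∈ arcSpace R m)
    (hwR : ∀ k : Fin m, k.val + 1 < m → w k 1 ≠ 0)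
    {v : Fin m → R} {lam : R} (hJ : jacobi w *ᵥ v = lam • v) (hlam : lam * lam = 1) :
    shift R m *ᵥ coinLift w v = lam • coinLift w v := by
  set a := coinLift w v
  set b := shift R m *ᵥ a
  have ha := coinLift_mem_arcSpace hends v
  have hSb : shift R m *ᵥ b = a := shift_mulVec_shift_mulVec ha
  set d := b - lam • a
  have hd : d ∈ arcSpace R m :=
    Submodule.sub_mem _ (shift_mulVec_mem_arcSpace a) (Submodule.smul_mem _ lam ha)
  have hSd : shift R m *ᵥ d = (-lam) • d := by
    ext z
    simp only [d, mulVec_sub, mulVec_smul, hSb, Pi.sub_apply, Pi.smul_apply, smul_eq_mul]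
    linear_combination (-a z) * hlam
  have hCd : C *ᵥ d = -d := by
    rw [mulVec_sub, mulVec_smul, hC.mulVec_coinLift hw hends, hC.mulVec_shift_mulVec_coinLift hJ]
    ext z
    simp only [d, Pi.sub_apply, Pi.smul_apply, Pi.neg_apply, smul_eq_mul]
    ring
  have hwd : coinContract w d = 0 := by
    have h := hC d hd
    rw [hCd, eq_sub_iff_add_eq, neg_add_cancel, eq_comm, smul_eq_zero] at h
    by_contra hne
    exact coinLift_ne_zero hw hne (h.resolve_left two_ne_zero)
  exact sub_eq_zero.mp (eq_zero_of_shift_mulVec_eq_smul hwR hd hSd hwd)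

theorem shift_mul_mulVec_coinLift_of_mul_self_eq_one [NoZeroDivisors R] [NeZero (2 : R)]
    (hC : IsReflectionCoin w C) (hw : ∀ k, ∑ c, w k c ^ 2 = 1)
    (hends : Function.uncurry w ∈ arcSpace R m) (hwR : ∀ k : Fin m, k.val + 1 < m → w k 1 ≠ 0)
    {v : Fin m → R} {lam : R} (hJ : jacobi w *ᵥ v = lam • v) (hlam : lam * lam = 1) :
    (shift R m * C) *ᵥ coinLift w v = lam • coinLift w v := by
  rw [← mulVec_mulVec, hC.mulVec_coinLift hw hends,
    shift_mulVec_coinLift_eq_smul hC hw hends hwR hJ hlam]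

end Spectrum

end PathWalk

open PathWalk

noncomputable def szegedyCoin (p : ℝ) (n : ℕ) (k : Fin (2 * n)) : Fin 2 → ℂ :=
  if k.val = 0 then ![0, 1]
  else if k.val ≤ n - 1 then phi1 p
  else if k.val ≤ 2 * n - 2 then phi2 p
  else ![1, 0]

section Szegedy

variable {p : ℝ} {n : ℕ}

theorem liftv_eq_coinLift (v : Fin (2 * n) → ℝ) :
    liftv p n v = coinLift (szegedyCoin p n) (fun k => (v k : ℂ)) := by
  ext ⟨k, c⟩
  revert c
  simp only [Fin.forall_fin_two, liftv, coinLift, szegedyCoin]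
  simp only [Fin.isValue, zero_ne_one, one_ne_zero, ↓reduceIte, mul_ite, mul_zero, mul_one]
  split_ifs <;> simp [phi1, phi2]

theorem szegedyCoin_sum_sq (hp₀ : 0 ≤ p) (hp₁ : p ≤ 1) (k : Fin (2 * n)) :
    ∑ c, szegedyCoin p n k c ^ 2 = 1 := by
  simp only [szegedyCoin, Fin.sum_univ_two]
  split_ifs <;> simp [phi1, phi2, ← Complex.ofReal_pow, Real.sq_sqrt, hp₀, hp₁]

theorem uncurry_szegedyCoin_mem_arcSpace :
    Function.uncurry (szegedyCoin p n) ∈ arcSpace ℂ (2 * n) := fun k =>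
  ⟨fun hk => by simp [szegedyCoin, hk], fun hk => by
    simp only [Function.uncurry_apply_pair, szegedyCoin]
    rw [if_neg (by omega), if_neg (by omega), if_neg (by omega)]
    rfl⟩

theorem szegedyCoin_right_ne_zero (hp₀ : 0 < p) (hp₁ : p < 1) (k : Fin (2 * n))
    (hk : k.val + 1 < 2 * n) : szegedyCoin p n k 1 ≠ 0 := by
  simp only [szegedyCoin]
  split_ifs <;> first | omega | simp [phi1, phi2, Real.sqrt_ne_zero', hp₀, hp₁]

theorem szegedyCoin_right_mul_left (hn : 2 ≤ n) (hp₀ : 0 ≤ p) (hp₁ : p ≤ 1)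
    {i j : Fin (2 * n)} (hij : i.val + 1 = j.val) :
    szegedyCoin p n i 1 * szegedyCoin p n j 0 =
      ((if i.val = 0 ∨ i.val = 2 * n - 2 then √p
        else if i.val = n - 1 then 1 - p else √(p * (1 - p)) : ℝ) : ℂ) := by
  simp only [szegedyCoin]
  split_ifs <;> (try omega) <;>
    simp [phi1, phi2, ← Complex.ofReal_mul, Real.sqrt_mul hp₀,
      Real.mul_self_sqrt (sub_nonneg.2 hp₁), mul_comm √(1 - p)]

theorem Jp_map_ofReal (hn : 2 ≤ n) (hp₀ : 0 ≤ p) (hp₁ : p ≤ 1) :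
    (Jp p n).map Complex.ofReal = jacobi (szegedyCoin p n) := by
  ext i j
  rw [map_apply, Jp, of_apply, jacobi, of_apply]
  by_cases hij : i.val + 1 = j.val
  · rw [if_pos (Or.inl hij), if_pos hij, szegedyCoin_right_mul_left hn hp₀ hp₁ hij,
      min_eq_left (by omega)]
  by_cases hji : j.val + 1 = i.val
  · rw [if_pos (Or.inr hji), if_neg hij, if_pos hji, szegedyCoin_right_mul_left hn hp₀ hp₁ hji,
      min_eq_right (by omega)]
  rw [if_neg (by tauto), if_neg hij, if_neg hji, Complex.ofReal_zero]

theorem Cmat_mulVec_apply (x : Fin (2 * n) × Fin 2 → ℂ) (k : Fin (2 * n)) (c : Fin 2) :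
    (Cmat p n *ᵥ x) (k, c) = ∑ d, Cmat p n (k, c) (k, d) * x (k, d) := by
  rw [mulVec, dotProduct, Fintype.sum_prod_type, Finset.sum_eq_single k]
  · intro j _ hj
    exact Finset.sum_eq_zero fun d _ => by simp [Cmat, Ne.symm hj]
  · simp

theorem isReflectionCoin_Cmat : IsReflectionCoin (szegedyCoin p n) (Cmat p n) := by
  intro x hx
  ext ⟨k, c⟩
  rw [Cmat_mulVec_apply]
  revert c
  simp only [Fin.forall_fin_two, Pi.sub_apply, Pi.smul_apply, smul_eq_mul, coinLift,
    coinContract, Cmat, of_apply, szegedyCoin, Fin.sum_univ_two, ne_eq, not_true_eq_false,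
    ↓reduceIte, Fin.isValue, zero_ne_one, one_ne_zero, and_self, and_false, false_and, sub_zero]
  have hk := k.isLt
  by_cases hL : k.val = 0
  · simp only [hL, ↓reduceIte, (hx k).1 hL, cons_val_zero, cons_val_one]
    constructor <;> ring
  by_cases hR : k.val = 2 * n - 1
  · simp only [hL, eq_true hR, ↓reduceIte, (hx k).2 (by omega), cons_val_zero, cons_val_one,
      show ¬ k.val ≤ n - 1 by omega, show ¬ k.val ≤ 2 * n - 2 by omega]
    constructor <;> ring
  by_cases h₁ : k.val ≤ n - 1
  · simp only [hL, hR, h₁, ↓reduceIte]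
    constructor <;> ring
  · simp only [hL, hR, h₁, show k.val ≤ 2 * n - 2 by omega, ↓reduceIte]
    constructor <;> ring

theorem jacobi_szegedyCoin_mulVec_ofReal (hn : 2 ≤ n) (hp₀ : 0 ≤ p) (hp₁ : p ≤ 1)
    {v : Fin (2 * n) → ℝ} {lam : ℝ} (hJ : Jp p n *ᵥ v = lam • v) :
    jacobi (szegedyCoin p n) *ᵥ (fun k => (v k : ℂ)) = (lam : ℂ) • fun k => (v k : ℂ) := by
  ext k
  rw [← Jp_map_ofReal hn hp₀ hp₁]
  have h := RingHom.map_mulVec Complex.ofRealHom (Jp p n) v k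
  rw [hJ] at h
  exact h.symm.trans (by simp)

theorem Smat_eq_shift : Smat n = shift ℂ (2 * n) := rfl

end Szegedy

theorem Complex.exp_mul_I_mul_self_add_one (z : ℂ) :
    exp (z * I) * exp (z * I) + 1 = 2 * cos z * exp (z * I) := by
  rw [exp_mul_I]
  linear_combination (sin z ^ 2) * I_sq - sin_sq_add_cos_sq z

/-- Spectral mapping for the Szegedy walk: if `λ ≠ ±1` is an eigenvalue of
`J_{2n}(p)` with normalized eigenvector `ṽ`, `a` its lift, `b = S a`, and
`cos φ = λ`, then `u_± = a - e^{±iφ} b` is an eigenvector of `U^{(2n)}` with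
eigenvalue `e^{±iφ}`; moreover the lifts of `±1`-eigenvectors of `J_{2n}(p)` are
eigenvectors of `U^{(2n)}` with eigenvalues `±1`. -/
theorem szegedy_spectral_mapping
    (p : ℝ) (hp : 0 < p) (hp1 : p < 1) (n : ℕ) (hn : 2 ≤ n) :
    (∀ (lam φ : ℝ) (v : Fin (2*n) → ℝ), v ≠ 0 → (∑ i, (v i)^2 = 1) →
      (Jp p n).mulVec v = lam • v → lam ≠ 1 → lam ≠ -1 → Real.cos φ = lam →
      ∀ s : ℝ, s = 1 ∨ s = -1 →
        (Umat p n).mulVec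
            (liftv p n v - Complex.exp ((s*φ : ℝ) * Complex.I) • (Smat n).mulVec (liftv p n v))
          = Complex.exp ((s*φ : ℝ) * Complex.I) •
            (liftv p n v - Complex.exp ((s*φ : ℝ) * Complex.I) • (Smat n).mulVec (liftv p n v)) ∧
        liftv p n v - Complex.exp ((s*φ : ℝ) * Complex.I) • (Smat n).mulVec (liftv p n v) ≠ 0) ∧
    (∀ v : Fin (2*n) → ℝ, v ≠ 0 → (Jp p n).mulVec v = v →
      (Umat p n).mulVec (liftv p n v) = liftv p n v ∧ liftv p n v ≠ 0) ∧
    (∀ v : Fin (2*n) → ℝ, v ≠ 0 → (Jp p n).mulVec v = -v →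
      (Umat p n).mulVec (liftv p n v) = -(liftv p n v) ∧ liftv p n v ≠ 0) := by
  have hC := isReflectionCoin_Cmat (p := p) (n := n)
  have hw := szegedyCoin_sum_sq (n := n) hp.le hp1.le
  have hends := uncurry_szegedyCoin_mem_arcSpace (p := p) (n := n)
  have hR := szegedyCoin_right_ne_zero (n := n) hp hp1
  have ofReal_ne_zero {v : Fin (2 * n) → ℝ} (hv : v ≠ 0) : (fun k => (v k : ℂ)) ≠ 0 :=
    fun h => hv (funext fun k => by simpa using congrFun h k)
  simp only [liftv_eq_coinLift, Umat, Smat_eq_shift]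
  refine ⟨fun lam φ v hv _ hJ hlam₁ hlam₂ hcos s hs => ?_, fun v hv hJ => ?_, fun v hv hJ => ?_⟩
  · have he := Complex.exp_mul_I_mul_self_add_one (s * φ : ℝ)
    have hcos' : Real.cos (s * φ) = lam := by rcases hs with rfl | rfl <;> simpa
    rw [← Complex.ofReal_cos, hcos'] at he
    have hJ' := jacobi_szegedyCoin_mulVec_ofReal hn hp.le hp1.le hJ
    exact ⟨shift_mul_mulVec_coinLift_sub_smul hC hw hends hJ' he,
      coinLift_sub_smul_shift_mulVec_ne_zero hw hends (ofReal_ne_zero hv) he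
        (by exact_mod_cast hlam₁) (by exact_mod_cast hlam₂)⟩
  · have hJ' := jacobi_szegedyCoin_mulVec_ofReal (lam := 1) hn hp.le hp1.le (by rw [hJ, one_smul])
    refine ⟨?_, coinLift_ne_zero hw (ofReal_ne_zero hv)⟩
    simpa using shift_mul_mulVec_coinLift_of_mul_self_eq_one hC hw hends hR hJ' (by norm_num)
  · have hJ' := jacobi_szegedyCoin_mulVec_ofReal (lam := -1) hn hp.le hp1.le
      (by rw [hJ, neg_one_smul])
    refine ⟨?_, coinLift_ne_zero hw (ofReal_ne_zero hv)⟩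
    simpa using shift_mul_mulVec_coinLift_of_mul_self_eq_one hC hw hends hR hJ' (by norm_num)
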